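/- Let Ω be a compact metric space, T : Ω → Ω a homeomorphism such that every T-orbit is dense (minimality), and let (f_n)_{n≥1} be a continuous subadditive cocycle, i.e. each f_n : Ω → ℝ is continuous and f_{n+m}(ω) ≤ f_n(ω) + f_m(T^n ω) for all n,m ≥ 1 and all ω ∈ Ω. If the limit φ(ω) = lim_{n→∞} f_n(ω)/n exists for every ω ∈ Ω, then φ is a constant function and the convergence f_n/n → φ is uniform on Ω. -/

import Mathlib

/-!
Fix `δ > 0`. The closed sets `{ω | ∀ n ≥ N, |f n ω / n - f N ω / N| ≤ δ}` cover `Ω` because every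
ratio sequence converges, so by Baire one of them has interior, and shrinking it gives a nonempty
open set `W` on which `f n / n` stays within `2δ` of a constant `c` for all large `n`. Compactness
and minimality give a time `R` within which every orbit enters `W`, and within which every point is
reached from `W`. Splitting `f n ω` by subadditivity at the entrance time (upper bound) or at the
departure time (lower bound) moves the estimate from `W` to every point at the cost of an error
bounded independently of `n`. Hence `f n / n` is uniformly within `2δ + O(1/n)` of `c`; as `δ` is
arbitrary, `φ` is constant and the convergence is uniform.
-/

open Filter Set Topology

/-- Minimality: every `ℤ`-orbit of the homeomorphism `T` is dense. -/
def IsMinimalSystem {Ω : Type*} [MetricSpace Ω] (T : Ω ≃ₜ Ω) : Prop :=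
  ∀ ω : Ω, Dense (Set.range fun n : ℤ => (T.toEquiv ^ n) ω)

namespace Homeomorph

variable {X : Type*} [TopologicalSpace X]

lemma toEquiv_zpow (T : X ≃ₜ X) (n : ℤ) : (T ^ n).toEquiv = T.toEquiv ^ n :=
  map_zpow (⟨⟨Homeomorph.toEquiv, rfl⟩, fun _ _ => rfl⟩ : (X ≃ₜ X) →* Equiv.Perm X) T n

lemma coe_pow (T : X ≃ₜ X) (n : ℕ) : ⇑(T ^ n) = (⇑T)^[n] :=
  hom_coe_pow _ rfl (fun _ _ => rfl) T n

variable {T : X ≃ₜ X} {W : Set X} {M : ℕ}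

lemma exists_iterate_mem_of_forall_exists_zpow_mem
    (hM : ∀ x : X, ∃ n ∈ Icc (0 : ℤ) M, (T ^ n) x ∈ W) (x : X) :
    ∃ t ≤ M, (⇑T)^[t] x ∈ W := by
  obtain ⟨n, ⟨hn0, hnM⟩, hn⟩ := hM x
  lift n to ℕ using hn0
  exact ⟨n, by omega, by rwa [← coe_pow, ← zpow_natCast]⟩

lemma exists_iterate_eq_of_forall_exists_zpow_mem
    (hM : ∀ x : X, ∃ n ∈ Icc (-M : ℤ) 0, (T ^ n) x ∈ W) (x : X) :
    ∃ t ≤ M, ∃ y ∈ W, (⇑T)^[t] y = x := by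
  obtain ⟨n, ⟨hMn, hn0⟩, hn⟩ := hM x
  obtain ⟨t, rfl⟩ : ∃ t : ℕ, n = -t := ⟨n.natAbs, by omega⟩
  refine ⟨t, by omega, _, hn, ?_⟩
  rw [← coe_pow, ← mul_apply, ← zpow_natCast, ← zpow_add, add_neg_cancel, zpow_zero, one_apply]

end Homeomorph

namespace IsMinimalSystem

variable {Ω : Type*} [MetricSpace Ω] [CompactSpace Ω] {T : Ω ≃ₜ Ω} {W : Set Ω}

lemma exists_forall_exists_zpow_mem (hT : IsMinimalSystem T) (hW : IsOpen W)
    (hne : W.Nonempty) : ∃ M : ℕ, ∀ (k : ℤ) (ω : Ω), ∃ n ∈ Icc k (k + M), (T ^ n) ω ∈ W := by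
  have hcover : univ ⊆ ⋃ n : ℤ, ⇑(T ^ n) ⁻¹' W := fun ω _ => by
    obtain ⟨_, ⟨n, rfl⟩, hn⟩ := (hT ω).exists_mem_open hW hne
    exact mem_iUnion.2 ⟨n, by rwa [mem_preimage, ← Homeomorph.coe_toEquiv,
      Homeomorph.toEquiv_zpow]⟩
  obtain ⟨s, hs⟩ := isCompact_univ.elim_finite_subcover _
    (fun n => hW.preimage (T ^ n).continuous) hcover
  set M := s.sup Int.natAbs
  -- every orbit meets `W` at a time in `[-M, M]`; start the orbit at `T ^ (k + M) ω`
  refine ⟨2 * M, fun k ω => ?_⟩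
  obtain ⟨n, hns, hn⟩ := mem_iUnion₂.1 (hs (mem_univ ((T ^ (k + M)) ω)))
  have : n.natAbs ≤ M := Finset.le_sup (f := Int.natAbs) hns
  refine ⟨n + (k + M), ⟨by omega, by omega⟩, ?_⟩
  rwa [zpow_add, Homeomorph.mul_apply]

end IsMinimalSystem

def IsSubadditiveCocycle {α : Type*} (T : α → α) (f : ℕ → α → ℝ) : Prop :=
  ∀ n m : ℕ, 1 ≤ n → 1 ≤ m → ∀ ω, f (n + m) ω ≤ f n ω + f m (T^[n] ω)

namespace IsSubadditiveCocycle

variable {α : Type*} {T : α → α} {f : ℕ → α → ℝ}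

lemma sub_mul_const (hf : IsSubadditiveCocycle T f) (c : ℝ) :
    IsSubadditiveCocycle T fun n ω => f n ω - n * c := by
  intro n m hn hm ω
  have := hf n m hn hm ω
  push_cast
  linarith

variable {W : Set α} {N R n : ℕ} {ε B : ℝ}

lemma le_add_mul_of_forall_exists_iterate_mem (hf : IsSubadditiveCocycle T f) (hN : 1 ≤ N)
    (hB : 0 ≤ B) (hfB : ∀ t, 1 ≤ t → t ≤ R → ∀ ω, f t ω ≤ B) (hε : 0 ≤ ε)
    (hW : ∀ ω ∈ W, ∀ m, N ≤ m → f m ω ≤ ε * m) (hhit : ∀ ω, ∃ t ≤ R, T^[t] ω ∈ W)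
    (hn : N + R ≤ n) (ω : α) :
    f n ω ≤ B + ε * n := by
  obtain ⟨t, htR, htW⟩ := hhit ω
  rcases Nat.eq_zero_or_pos t with rfl | ht
  · linarith [hW ω htW n (by omega)]
  · obtain ⟨m, rfl⟩ : ∃ m, n = t + m := ⟨n - t, by omega⟩
    have hm := hW _ htW m (by omega)
    have hsub := hf t m ht (by omega) ω
    have hft := hfB t ht htR ω
    have : ε * m ≤ ε * ↑(t + m) := by gcongr; omega
    linarith

lemma sub_sub_mul_le_of_forall_exists_iterate_eq (hf : IsSubadditiveCocycle T f) (hN : 1 ≤ N)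
    (hB : 0 ≤ B) (hfB : ∀ t, 1 ≤ t → t ≤ R → ∀ ω, f t ω ≤ B) (hε : 0 ≤ ε)
    (hW : ∀ ω ∈ W, ∀ m, N ≤ m → -(ε * m) ≤ f m ω)
    (hreach : ∀ ω, ∃ t ≤ R, ∃ ω' ∈ W, T^[t] ω' = ω) (hn : N ≤ n) (ω : α) :
    -(B + ε * R) - ε * n ≤ f n ω := by
  obtain ⟨t, htR, ω', hω'W, rfl⟩ := hreach ω
  have hεR : 0 ≤ ε * R := by positivity
  rcases Nat.eq_zero_or_pos t with rfl | ht
  · simp only [Function.iterate_zero, id_eq]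
    linarith [hW ω' hω'W n hn]
  · have htn := hW ω' hω'W (t + n) (by omega)
    have hsub := hf t n ht (by omega) ω'
    have hft := hfB t ht htR ω'
    have : ε * t ≤ ε * R := by gcongr
    push_cast at htn
    linarith

lemma abs_le_of_forall_exists_iterate (hf : IsSubadditiveCocycle T f) (hN : 1 ≤ N)
    (hB : 0 ≤ B) (hfB : ∀ t, 1 ≤ t → t ≤ R → ∀ ω, f t ω ≤ B) (hε : 0 ≤ ε)
    (hW : ∀ ω ∈ W, ∀ m, N ≤ m → |f m ω| ≤ ε * m) (hhit : ∀ ω, ∃ t ≤ R, T^[t] ω ∈ W)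
    (hreach : ∀ ω, ∃ t ≤ R, ∃ ω' ∈ W, T^[t] ω' = ω) (hn : N + R ≤ n) (ω : α) :
    |f n ω| ≤ B + ε * R + ε * n := by
  have hεR : 0 ≤ ε * R := by positivity
  have hup := hf.le_add_mul_of_forall_exists_iterate_mem hN hB hfB hε
    (fun ω hω m hm => (abs_le.1 (hW ω hω m hm)).2) hhit hn ω
  have hlow := hf.sub_sub_mul_le_of_forall_exists_iterate_eq hN hB hfB hε
    (fun ω hω m hm => (abs_le.1 (hW ω hω m hm)).1) hreach (n := n) (by omega) ω
  exact abs_le.2 ⟨by linarith, by linarith⟩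

end IsSubadditiveCocycle

lemma exists_isOpen_nonempty_forall_dist_lt {X E : Type*} [TopologicalSpace X] [BaireSpace X]
    [Nonempty X] [PseudoMetricSpace E] {g : ℕ → X → E} (hg : ∀ n, Continuous (g n))
    (hcauchy : ∀ x, CauchySeq fun n => g n x) {δ : ℝ} (hδ : 0 < δ) :
    ∃ W : Set X, IsOpen W ∧ W.Nonempty ∧
      ∃ N : ℕ, ∃ c : E, ∀ x ∈ W, ∀ n, N ≤ n → dist (g n x) c < δ := by
  set S : ℕ → Set X := fun N => ⋂ n ≥ N, {x | dist (g n x) (g N x) ≤ δ / 2}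
  have hS : ∀ N, IsClosed (S N) := fun N =>
    isClosed_biInter fun n _ => isClosed_le ((hg n).dist (hg N)) continuous_const
  have hcover : ⋃ N, S N = univ := eq_univ_of_forall fun x => by
    obtain ⟨N, hN⟩ := Metric.cauchySeq_iff'.1 (hcauchy x) (δ / 2) (half_pos hδ)
    exact mem_iUnion.2 ⟨N, mem_iInter₂.2 fun n hn => (hN n hn).le⟩
  obtain ⟨N, u, hu⟩ := nonempty_interior_of_iUnion_of_closed hS hcover
  refine ⟨interior (S N) ∩ g N ⁻¹' Metric.ball (g N u) (δ / 2),
    isOpen_interior.inter (Metric.isOpen_ball.preimage (hg N)),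
    ⟨u, hu, Metric.mem_ball_self (half_pos hδ)⟩, N, g N u, ?_⟩
  rintro x ⟨hxS, hxc⟩ n hn
  calc dist (g n x) (g N u) ≤ dist (g n x) (g N x) + dist (g N x) (g N u) := dist_triangle _ _ _
    _ < δ / 2 + δ / 2 := add_lt_add_of_le_of_lt (mem_iInter₂.1 (interior_subset hxS) n hn) hxc
    _ = δ := add_halves δ

lemma exists_const_and_tendstoUniformly_of_forall_exists_eventually_dist_lt {X E : Type*}
    [MetricSpace E] {g : ℕ → X → E} {φ : X → E}
    (hφ : ∀ x, Tendsto (fun n => g n x) atTop (𝓝 (φ x)))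
    (hg : ∀ δ > 0, ∃ c : E, ∀ᶠ n in atTop, ∀ x, dist (g n x) c < δ) :
    (∃ c, ∀ x, φ x = c) ∧ TendstoUniformly g φ atTop := by
  have hφc : ∀ δ > 0, ∃ c : E, (∀ᶠ n in atTop, ∀ x, dist (g n x) c < δ) ∧
      ∀ x, dist (φ x) c ≤ δ := fun δ hδ => by
    obtain ⟨c, hc⟩ := hg δ hδ
    exact ⟨c, hc, fun x => le_of_tendsto ((hφ x).dist tendsto_const_nhds)
      (hc.mono fun n hn => (hn x).le)⟩
  refine ⟨?_, Metric.tendstoUniformly_iff.2 fun ε hε => ?_⟩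
  · rcases isEmpty_or_nonempty X with hX | ⟨⟨x₀⟩⟩
    · obtain ⟨c, -⟩ := hg 1 one_pos
      exact ⟨c, isEmptyElim⟩
    · refine ⟨φ x₀, fun x => eq_of_forall_dist_le fun δ hδ => ?_⟩
      obtain ⟨c, -, hc⟩ := hφc (δ / 2) (half_pos hδ)
      linarith [dist_triangle_right (φ x) (φ x₀) c, hc x, hc x₀]
  · obtain ⟨c, hgc, hφc⟩ := hφc (ε / 2) (half_pos hε)
    filter_upwards [hgc] with n hn x
    linarith [dist_triangle_right (φ x) (g n x) c, hn x, hφc x]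

lemma Real.dist_div_eq_abs_sub_mul_div (a c : ℝ) {x : ℝ} (hx : 0 < x) :
    dist (a / x) c = |a - x * c| / x := by
  rw [Real.dist_eq, eq_div_iff hx.ne', ← abs_of_pos hx, ← abs_mul, abs_of_pos hx, sub_mul,
    div_mul_cancel₀ _ hx.ne', mul_comm]

theorem IsSubadditiveCocycle.exists_eventually_forall_dist_div_lt {Ω : Type*} [MetricSpace Ω]
    [CompactSpace Ω] {T : Ω ≃ₜ Ω} (hT : IsMinimalSystem T) {f : ℕ → Ω → ℝ}
    (hf : IsSubadditiveCocycle T f) (hcont : ∀ n, 1 ≤ n → Continuous (f n))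
    (hcauchy : ∀ ω, CauchySeq fun n : ℕ => f n ω / n) {δ : ℝ} (hδ : 0 < δ) :
    ∃ c : ℝ, ∀ᶠ n : ℕ in atTop, ∀ ω, dist (f n ω / n) c < δ := by
  rcases isEmpty_or_nonempty Ω with hΩ | hΩ
  · exact ⟨0, .of_forall fun _ => isEmptyElim⟩
  -- `f 0 ω / 0 = 0`, so every ratio is continuous
  have hratio : ∀ n, Continuous fun ω => f n ω / n := by
    rintro (_ | n)
    · simpa using continuous_const
    · exact (hcont _ n.succ_pos).div_const _
  obtain ⟨W, hWo, hWne, N, c, hW⟩ :=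
    exists_isOpen_nonempty_forall_dist_lt hratio hcauchy (half_pos hδ)
  obtain ⟨M, hM⟩ := hT.exists_forall_exists_zpow_mem hWo hWne
  set h : ℕ → Ω → ℝ := fun n ω => f n ω - n * c
  have hhW : ∀ ω ∈ W, ∀ m, N + 1 ≤ m → |h m ω| ≤ δ / 2 * m := fun ω hω m hm => by
    have hm0 : (0 : ℝ) < m := by exact_mod_cast (by omega : 0 < m)
    have := hW ω hω m (by omega)
    rw [Real.dist_div_eq_abs_sub_mul_div _ _ hm0, div_lt_iff₀ hm0] at this
    exact this.le
  obtain ⟨B, hB⟩ : BddAbove (⋃ t ∈ Finset.Icc 1 M, range (h t)) :=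
    (Finset.finite_toSet _).bddAbove_biUnion.2 fun t ht =>
      (isCompact_range ((hcont t (Finset.mem_Icc.1 ht).1).sub continuous_const)).bddAbove
  have hhB : ∀ t, 1 ≤ t → t ≤ M → ∀ ω, h t ω ≤ max B 0 := fun t h1 h2 ω =>
    (hB (mem_iUnion₂.2 ⟨t, Finset.mem_Icc.2 ⟨h1, h2⟩, mem_range_self ω⟩)).trans
      (le_max_left _ _)
  set K := max B 0 + δ / 2 * M
  refine ⟨c, ?_⟩
  filter_upwards [eventually_ge_atTop (N + 1 + M),
    (tendsto_const_div_atTop_nhds_zero_nat K).eventually (gt_mem_nhds (half_pos hδ))]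
    with n hn hKn ω
  have hbound := (hf.sub_mul_const c).abs_le_of_forall_exists_iterate (by omega)
    (le_max_right _ _) hhB (by positivity) hhW
    (T.exists_iterate_mem_of_forall_exists_zpow_mem fun ω => by simpa using hM 0 ω)
    (T.exists_iterate_eq_of_forall_exists_zpow_mem fun ω => by simpa using hM (-M) ω) hn ω
  have hn0 : (0 : ℝ) < n := by exact_mod_cast (by omega : 0 < n)
  calc dist (f n ω / n) c = |h n ω| / n := Real.dist_div_eq_abs_sub_mul_div _ _ hn0
    _ ≤ (K + δ / 2 * n) / n := by gcongr
    _ = K / n + δ / 2 := by field_simp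
    _ < δ := by linarith

/-- Furstenberg–Weiss: for a minimal system and a continuous subadditive cocycle
`(f_n)`, pointwise existence of `φ(ω) = lim f_n(ω)/n` implies that `φ` is constant and the
convergence is uniform. -/
theorem subadditive_pointwise_implies_uniform
    {Ω : Type*} [MetricSpace Ω] [CompactSpace Ω]
    (T : Ω ≃ₜ Ω) (hmin : IsMinimalSystem T)
    (f : ℕ → Ω → ℝ)
    (hcont : ∀ n : ℕ, 1 ≤ n → Continuous (f n))
    (hsub : ∀ n m : ℕ, 1 ≤ n → 1 ≤ m → ∀ ω : Ω, f (n + m) ω ≤ f n ω + f m ((⇑T)^[n] ω))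
    (φ : Ω → ℝ)
    (hφ : ∀ ω : Ω, Filter.Tendsto (fun n : ℕ => f n ω / (n : ℝ)) Filter.atTop (nhds (φ ω))) :
    (∃ c : ℝ, ∀ ω : Ω, φ ω = c) ∧
      TendstoUniformly (fun (n : ℕ) (ω : Ω) => f n ω / (n : ℝ)) φ Filter.atTop := by
  have hf : IsSubadditiveCocycle T f := hsub
  exact exists_const_and_tendstoUniformly_of_forall_exists_eventually_dist_lt hφ fun δ hδ =>
    hf.exists_eventually_forall_dist_div_lt hmin hcont (fun ω => (hφ ω).cauchySeq) hδ
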